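/- For functions f and g of Heaviside type (i.e., f(t) = F(t)H(t) with F smooth and H the Heaviside step function), the time derivative of the Riemann convolution satisfies f * (∂_t g) = f(0⁺) g + (f' H) * g, where f' denotes the classical derivative of F for t > 0. -/

import Mathlib

open MeasureTheory Set intervalIntegral

open scoped Interval

theorem integral_mul_deriv_comp_sub_add_eq {A : Type*} [NormedRing A] [NormedAlgebra ℝ A]
    [CompleteSpace A] {F G F' G' : ℝ → A} {t : ℝ}
    (hF : ∀ τ ∈ [[0, t]], HasDerivAt F (F' τ) τ) (hG : ∀ τ ∈ [[0, t]], HasDerivAt G (G' τ) τ)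
    (hF' : IntervalIntegrable F' volume 0 t) (hG' : IntervalIntegrable G' volume 0 t) :
    (∫ τ in (0:ℝ)..t, F τ * G' (t - τ)) + F t * G 0 =
      F 0 * G t + ∫ τ in (0:ℝ)..t, F' τ * G (t - τ) := by
  -- integrate by parts against `τ ↦ -G (t - τ)`, whose derivative is `G' (t - τ)`
  have hv : ∀ τ ∈ [[0, t]], HasDerivAt (fun τ ↦ -G (t - τ)) (G' (t - τ)) τ := by
    intro τ hτ
    have hmem : t - τ ∈ [[0, t]] := by
      rw [mem_uIcc] at hτ ⊢
      grind
    simpa [Pi.neg_def] using ((hG _ hmem).comp_const_sub t τ).neg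
  have hv' : IntervalIntegrable (fun τ ↦ G' (t - τ)) volume 0 t := by
    simpa using (hG'.comp_sub_left t).symm
  have hparts := integral_mul_deriv_eq_deriv_mul hF hv hF' hv'
  simp only [mul_neg, sub_self, sub_zero, intervalIntegral.integral_neg, sub_neg_eq_add] at hparts
  rw [hparts]
  abel

theorem stmt_0_general (F G : ℝ → ℝ) (hF : ContDiff ℝ 1 F) (hG : ContDiff ℝ 1 G)
    (t : ℝ) :
    (∫ τ in (0:ℝ)..t, F τ * deriv G (t - τ)) + F t * G 0 =
      F 0 * G t + ∫ τ in (0:ℝ)..t, deriv F τ * G (t - τ) :=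
  integral_mul_deriv_comp_sub_add_eq
    (fun τ _ ↦ (hF.differentiable one_ne_zero τ).hasDerivAt)
    (fun τ _ ↦ (hG.differentiable one_ne_zero τ).hasDerivAt)
    ((hF.continuous_deriv le_rfl).intervalIntegrable _ _)
    ((hG.continuous_deriv le_rfl).intervalIntegrable _ _)

/-- Boltzmann's operation: for Heaviside-type functions `f = F·H` and `g = G·H`
with `F, G` continuously differentiable, the time derivative of the Riemann
convolution satisfies `f * (∂ₜ g) = f(0⁺) g + (f' H) * g` for `t ≥ 0`.
(The distributional derivative `∂ₜ g` equals `G' H + G(0) δ`, so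
`(f * ∂ₜ g)(t) = ∫₀ᵗ F(τ) G'(t−τ) dτ + F(t) G(0)`.) -/
theorem stmt_0 (F G : ℝ → ℝ) (hF : ContDiff ℝ 1 F) (hG : ContDiff ℝ 1 G)
    (t : ℝ) (ht : 0 ≤ t) :
    (∫ τ in (0:ℝ)..t, F τ * deriv G (t - τ)) + F t * G 0 =
      F 0 * G t + ∫ τ in (0:ℝ)..t, deriv F τ * G (t - τ) :=
  stmt_0_general F G hF hG t
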